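/- arXiv:2003.12782 — 4 statements merged into one kernel-verified Lean document; each statement's English description precedes it below -/
import Mathlib

section
/- If 1 < β ≤ 2, then v_β is strictly increasing on [0, π/2] and strictly decreasing on [π/2, π]; if 1/2 ≤ β < 1, then v_β is strictly decreasing on [0, π/2] and strictly increasing on [π/2, π]. -/
open Real MeasureTheory Filter Topology Set
open scoped ENNReal RealInnerProductSpace

noncomputable section

/-- The forcing term `f_β(θ) = (β cos²θ + sin²θ)^(-5/2)`. -/
def fker (β θ : ℝ) : ℝ := (β * Real.cos θ ^ 2 + Real.sin θ ^ 2) ^ (-(5:ℝ)/2)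

/-- `v` is a π-periodic, twice continuously differentiable solution of `v'' + 9 v = f_β`. -/
def IsVBeta (β : ℝ) (v : ℝ → ℝ) : Prop :=
  ContDiff ℝ 2 v ∧ Function.Periodic v π ∧
    ∀ θ : ℝ, deriv (deriv v) θ + 9 * v θ = fker β θ

/-!
With `P = √(β cos²θ + sin²θ)`, the function `(-8P³ + 6(β+1)P - 3β/P) / (9β²)` is a π-periodic
solution of `v'' + 9v = P⁻⁵ = f_β`, and it is the only one: a π-periodic solution of
`w'' + 9w = 0` vanishes, because both Wronskians of `w` against `cos 3θ` and `sin 3θ` are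
constant and change sign under `θ ↦ θ + π`. Its derivative is
`(β - 1) cos θ sin θ · (8P⁴ - 2(β+1)P² - β) / (3β²P³)`, and for `1/2 ≤ β ≤ 2`, `β ≠ 1`, the last
factor is positive on `(0, π) \ {π/2}`, where `P²` lies strictly between `1` and `β`. So on
`(0, π)` the derivative has the sign of `(β - 1) cos θ`.
-/

theorem Function.Periodic.eq_zero_of_hasDerivAt_deriv {n : ℕ} (hn : Odd n) {w : ℝ → ℝ}
    (hper : Function.Periodic w π) (hw : Differentiable ℝ w)
    (hw' : ∀ θ, HasDerivAt (deriv w) (-(n ^ 2 * w θ)) θ) : w = 0 := by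
  have hper' : Function.Periodic (deriv w) π := fun θ => by
    rw [← deriv_comp_add_const, hper.funext]
  have hsin : ∀ θ, HasDerivAt (fun t => sin (n * t)) (n * cos (n * θ)) θ := fun θ =>
    ((hasDerivAt_id θ).const_mul (n : ℝ)).sin.congr_deriv (by simp; ring)
  have hcos : ∀ θ, HasDerivAt (fun t => cos (n * t)) (-(n * sin (n * θ))) θ := fun θ =>
    ((hasDerivAt_id θ).const_mul (n : ℝ)).cos.congr_deriv (by simp; ring)
  have hsin_anti : ∀ θ, sin (n * (θ + π)) = -sin (n * θ) := fun θ => by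
    rw [mul_add, sin_add_nat_mul_pi, hn.neg_one_pow, neg_one_mul]
  have hcos_anti : ∀ θ, cos (n * (θ + π)) = -cos (n * θ) := fun θ => by
    rw [mul_add, cos_add_nat_mul_pi, hn.neg_one_pow, neg_one_mul]
  have zero_of_const_of_anti (f : ℝ → ℝ) (hf : ∀ θ, HasDerivAt f 0 θ)
      (hanti : ∀ θ, f (θ + π) = -f θ) (θ : ℝ) : f θ = 0 := by
    have hconst : f (θ + π) = f θ := is_const_of_deriv_eq_zero
      (fun x => (hf x).differentiableAt) (fun x => (hf x).deriv) _ _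
    linarith [hanti θ]
  have hp := zero_of_const_of_anti (fun θ => deriv w θ * sin (n * θ) - n * w θ * cos (n * θ))
    (fun θ => (((hw' θ).mul (hsin θ)).sub (((hw θ).hasDerivAt.const_mul (n : ℝ)).mul
      (hcos θ))).congr_deriv (by ring))
    (fun θ => by simp only [hper θ, hper' θ, hsin_anti, hcos_anti]; ring)
  have hq := zero_of_const_of_anti (fun θ => deriv w θ * cos (n * θ) + n * w θ * sin (n * θ))
    (fun θ => (((hw' θ).mul (hcos θ)).add (((hw θ).hasDerivAt.const_mul (n : ℝ)).mul
      (hsin θ))).congr_deriv (by ring))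
    (fun θ => by simp only [hper θ, hper' θ, hsin_anti, hcos_anti]; ring)
  funext θ
  rw [Pi.zero_apply]
  apply mul_left_cancel₀ (Nat.cast_ne_zero.mpr hn.pos.ne' : (n : ℝ) ≠ 0)
  linear_combination sin (n * θ) * hq θ - cos (n * θ) * hp θ - n * w θ * sin_sq_add_cos_sq (n * θ)

namespace VBeta

def radial (β θ : ℝ) : ℝ := √(β * cos θ ^ 2 + sin θ ^ 2)

def profile (β p : ℝ) : ℝ := (-8 * p ^ 3 + 6 * (β + 1) * p - 3 * β / p) / (9 * β ^ 2)

def slope (β p : ℝ) : ℝ := (8 * p - 2 * (β + 1) / p - β / p ^ 3) / (3 * β ^ 2)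

def slopeDeriv (β p : ℝ) : ℝ := (8 + 2 * (β + 1) / p ^ 2 + 3 * β / p ^ 4) / (3 * β ^ 2)

def sol (β θ : ℝ) : ℝ := profile β (radial β θ)

def solDeriv (β θ : ℝ) : ℝ := (β - 1) * cos θ * sin θ * slope β (radial β θ)

variable {β : ℝ}

lemma trigQuad_pos (hβ : 0 < β) (θ : ℝ) : 0 < β * cos θ ^ 2 + sin θ ^ 2 := by
  rcases eq_or_ne (sin θ) 0 with hs | hs
  · have := sin_sq_add_cos_sq θ
    rw [hs] at this ⊢
    nlinarith
  · positivity

lemma radial_pos (hβ : 0 < β) (θ : ℝ) : 0 < radial β θ :=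
  sqrt_pos.mpr (trigQuad_pos hβ θ)

lemma radial_sq (hβ : 0 < β) (θ : ℝ) : radial β θ ^ 2 = β * cos θ ^ 2 + sin θ ^ 2 :=
  sq_sqrt (trigQuad_pos hβ θ).le

lemma fker_eq_inv_radial_pow (hβ : 0 < β) (θ : ℝ) : fker β θ = (radial β θ ^ 5)⁻¹ := by
  have hU := (trigQuad_pos hβ θ).le
  rw [fker, radial, sqrt_eq_rpow, ← rpow_mul_natCast hU, ← rpow_neg hU]
  norm_num

lemma hasDerivAt_radial (hβ : 0 < β) (θ : ℝ) :
    HasDerivAt (radial β) ((1 - β) * sin θ * cos θ / radial β θ) θ := by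
  have hquad : HasDerivAt (fun t => β * cos t ^ 2 + sin t ^ 2) (2 * ((1 - β) * sin θ * cos θ)) θ :=
    ((((hasDerivAt_cos θ).pow 2).const_mul β).add ((hasDerivAt_sin θ).pow 2)).congr_deriv
      (by push_cast; ring)
  refine (hquad.sqrt (trigQuad_pos hβ θ).ne').congr_deriv ?_
  rw [radial]
  ring

lemma hasDerivAt_profile (hβ : β ≠ 0) {p : ℝ} (hp : p ≠ 0) :
    HasDerivAt (profile β) (-p * slope β p) p := by
  have h := ((((hasDerivAt_pow 3 p).const_mul (-8)).add ((hasDerivAt_id p).const_mul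
    (6 * (β + 1)))).sub ((hasDerivAt_const p (3 * β)).div (hasDerivAt_id p) hp)).div_const
    (9 * β ^ 2)
  refine h.congr_deriv ?_
  simp only [slope, id]
  field_simp
  ring

lemma hasDerivAt_slope {p : ℝ} (hp : p ≠ 0) : HasDerivAt (slope β) (slopeDeriv β p) p := by
  refine (((((hasDerivAt_id p).const_mul 8).sub (((hasDerivAt_const p (2 * (β + 1))).div
    (hasDerivAt_id p) hp))).sub ((hasDerivAt_const p β).div (hasDerivAt_pow 3 p)
    (pow_ne_zero 3 hp))).div_const (3 * β ^ 2)).congr_deriv ?_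
  simp only [slopeDeriv, id]
  field_simp
  ring

-- `v'' + 9v = P⁻⁵`, once `(β - 1)(cos²θ - sin²θ)` and `(β - 1)² sin²θ cos²θ` are written in `P²`.
lemma profile_ode (hβ : β ≠ 0) {p : ℝ} (hp : p ≠ 0) :
    (2 * p ^ 2 - 1 - β) * slope β p - (p ^ 2 - 1) * (β - p ^ 2) * slopeDeriv β p / p
      + 9 * profile β p = (p ^ 5)⁻¹ := by
  simp only [slope, slopeDeriv, profile]
  field_simp
  ring

lemma hasDerivAt_sol (hβ : 0 < β) (θ : ℝ) : HasDerivAt (sol β) (solDeriv β θ) θ := by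
  have hP := radial_pos hβ θ
  refine ((hasDerivAt_profile hβ.ne' hP.ne').comp θ (hasDerivAt_radial hβ θ)).congr_deriv ?_
  rw [solDeriv]
  field_simp
  ring

lemma hasDerivAt_solDeriv (hβ : 0 < β) (θ : ℝ) :
    HasDerivAt (solDeriv β) (fker β θ - 9 * sol β θ) θ := by
  have hP := radial_pos hβ θ
  have hcs : HasDerivAt (fun t => (β - 1) * cos t * sin t)
      ((β - 1) * (cos θ ^ 2 - sin θ ^ 2)) θ :=
    (((hasDerivAt_cos θ).const_mul (β - 1)).mul (hasDerivAt_sin θ)).congr_deriv (by ring)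
  refine (hcs.mul ((hasDerivAt_slope hP.ne').comp θ (hasDerivAt_radial hβ θ))).congr_deriv ?_
  have hcos2 : (β - 1) * (cos θ ^ 2 - sin θ ^ 2) = 2 * radial β θ ^ 2 - 1 - β := by
    rw [radial_sq hβ]
    linear_combination (-1 - β) * sin_sq_add_cos_sq θ
  have hsc : (β - 1) ^ 2 * (sin θ ^ 2 * cos θ ^ 2)
      = (radial β θ ^ 2 - 1) * (β - radial β θ ^ 2) := by
    rw [radial_sq hβ]
    linear_combination ((β - 1) * β * cos θ ^ 2 - (β - 1) * sin θ ^ 2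
      + β * (sin θ ^ 2 + cos θ ^ 2 - 1)) * sin_sq_add_cos_sq θ
  rw [Function.comp_apply, fker_eq_inv_radial_pow hβ, sol, ← profile_ode hβ.ne' hP.ne', ← hcos2,
    ← hsc]
  field_simp
  ring

lemma sol_periodic : Function.Periodic (sol β) π := fun θ => by
  simp only [sol, radial, cos_add_pi, sin_add_pi, neg_sq]

lemma eq_sol_of_isVBeta (hβ : 0 < β) {v : ℝ → ℝ} (hv : IsVBeta β v) : v = sol β := by
  obtain ⟨hC, hper, hode⟩ := hv
  have hd : Differentiable ℝ v := hC.differentiable (by norm_num)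
  have hderiv : deriv (v - sol β) = deriv v - solDeriv β :=
    funext fun θ => ((hd θ).hasDerivAt.sub (hasDerivAt_sol hβ θ)).deriv
  have h := (hper.sub sol_periodic).eq_zero_of_hasDerivAt_deriv (n := 3) ⟨1, rfl⟩
    (hd.sub fun θ => (hasDerivAt_sol hβ θ).differentiableAt) fun θ => by
      rw [hderiv]
      refine ((hC.differentiable_deriv_two θ).hasDerivAt.sub
        (hasDerivAt_solDeriv hβ θ)).congr_deriv ?_
      simp only [Pi.sub_apply]
      linear_combination hode θ
  exact sub_eq_zero.mp h

lemma slope_pos (hβ : 1 / 2 ≤ β) (hβ2 : β ≤ 2) {p : ℝ} (hp : 0 < p) (hmin : min 1 β < p ^ 2) :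
    0 < slope β p := by
  have hquad : 0 < 8 * (p ^ 2) ^ 2 - 2 * (β + 1) * p ^ 2 - β := by
    -- `8u² - 2(β+1)u - β` equals `(u - β)(8u + 6β - 2) + 3β(2β - 1)`
    -- and `(u - 1)(8u + 6 - 2β) + 3(2 - β)`.
    rcases le_total β 1 with h | h
    · rw [min_eq_right h] at hmin
      nlinarith [mul_pos (sub_pos.mpr hmin) (by linarith : 0 < 8 * p ^ 2 + 6 * β - 2)]
    · rw [min_eq_left h] at hmin
      nlinarith [mul_pos (sub_pos.mpr hmin) (by linarith : 0 < 8 * p ^ 2 + 6 - 2 * β)]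
  have hβ0 : 0 < β := by linarith
  have he : slope β p = (8 * (p ^ 2) ^ 2 - 2 * (β + 1) * p ^ 2 - β) / (3 * β ^ 2 * p ^ 3) := by
    rw [slope]
    field_simp
  rw [he]
  positivity

lemma min_lt_radial_sq (hβ : 0 < β) (hβ1 : β ≠ 1) {θ : ℝ} (hs : sin θ ≠ 0) (hc : cos θ ≠ 0) :
    min 1 β < radial β θ ^ 2 := by
  rw [radial_sq hβ]
  have hs2 := pow_two_pos_of_ne_zero hs
  have hc2 := pow_two_pos_of_ne_zero hc
  have := sin_sq_add_cos_sq θ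
  rcases hβ1.lt_or_gt with h | h
  · rw [min_eq_right h.le]
    nlinarith
  · rw [min_eq_left h.le]
    nlinarith

lemma mul_solDeriv_pos (hβ : 1 / 2 ≤ β) (hβ2 : β ≤ 2) {θ : ℝ} (hθ : θ ∈ Ioo 0 π)
    (h : (β - 1) * cos θ ≠ 0) : 0 < (β - 1) * cos θ * solDeriv β θ := by
  have hβ0 : 0 < β := by linarith
  have hs := sin_pos_of_pos_of_lt_pi hθ.1 hθ.2
  have hslope := slope_pos hβ hβ2 (radial_pos hβ0 θ) (min_lt_radial_sq hβ0
    (sub_ne_zero.mp (left_ne_zero_of_mul h)) hs.ne' (right_ne_zero_of_mul h))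
  have he : (β - 1) * cos θ * solDeriv β θ
      = ((β - 1) * cos θ) ^ 2 * (sin θ * slope β (radial β θ)) := by
    rw [solDeriv]
    ring
  rw [he]
  exact mul_pos (pow_two_pos_of_ne_zero h) (mul_pos hs hslope)

lemma continuousOn_sol (hβ : 0 < β) (s : Set ℝ) : ContinuousOn (sol β) s :=
  fun θ _ => (hasDerivAt_sol hβ θ).continuousAt.continuousWithinAt

lemma strictMonoOn_sol (hβ : 1 / 2 ≤ β) (hβ2 : β ≤ 2) {a b : ℝ} (ha : 0 ≤ a) (hb : b ≤ π)
    (h : ∀ θ ∈ Ioo a b, 0 < (β - 1) * cos θ) : StrictMonoOn (sol β) (Icc a b) := by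
  have hβ0 : 0 < β := by linarith
  refine strictMonoOn_of_deriv_pos (convex_Icc a b) (continuousOn_sol hβ0 _) fun θ hθ => ?_
  rw [interior_Icc] at hθ
  rw [(hasDerivAt_sol hβ0 θ).deriv]
  exact pos_of_mul_pos_right (mul_solDeriv_pos hβ hβ2 ⟨ha.trans_lt hθ.1, hθ.2.trans_le hb⟩
    (h θ hθ).ne') (h θ hθ).le

lemma strictAntiOn_sol (hβ : 1 / 2 ≤ β) (hβ2 : β ≤ 2) {a b : ℝ} (ha : 0 ≤ a) (hb : b ≤ π)
    (h : ∀ θ ∈ Ioo a b, (β - 1) * cos θ < 0) : StrictAntiOn (sol β) (Icc a b) := by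
  have hβ0 : 0 < β := by linarith
  refine strictAntiOn_of_deriv_neg (convex_Icc a b) (continuousOn_sol hβ0 _) fun θ hθ => ?_
  rw [interior_Icc] at hθ
  rw [(hasDerivAt_sol hβ0 θ).deriv]
  exact neg_of_mul_pos_right (mul_solDeriv_pos hβ hβ2 ⟨ha.trans_lt hθ.1, hθ.2.trans_le hb⟩
    (h θ hθ).ne) (h θ hθ).le

end VBeta

/-- monotonicity of `v_β` on `[0, π/2]` and `[π/2, π]`. -/
theorem stmt2 (β : ℝ) (v : ℝ → ℝ) (hv : IsVBeta β v) :
    ((1 < β ∧ β ≤ 2) →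
      StrictMonoOn v (Set.Icc 0 (π/2)) ∧ StrictAntiOn v (Set.Icc (π/2) π)) ∧
    ((1/2 ≤ β ∧ β < 1) →
      StrictAntiOn v (Set.Icc 0 (π/2)) ∧ StrictMonoOn v (Set.Icc (π/2) π)) := by
  have hcos_pos : ∀ θ ∈ Ioo 0 (π / 2), 0 < cos θ := fun θ hθ =>
    cos_pos_of_mem_Ioo ⟨by linarith [hθ.1, pi_pos], hθ.2⟩
  have hcos_neg : ∀ θ ∈ Ioo (π / 2) π, cos θ < 0 := fun θ hθ =>
    cos_neg_of_pi_div_two_lt_of_lt hθ.1 (by linarith [hθ.2, pi_pos])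
  have hπ : 0 ≤ π / 2 := by positivity
  have hπ' : π / 2 ≤ π := by linarith [pi_pos]
  refine ⟨fun ⟨h1, h2⟩ => ?_, fun ⟨h1, h2⟩ => ?_⟩
  all_goals rw [VBeta.eq_sol_of_isVBeta (by linarith) hv]
  · exact ⟨VBeta.strictMonoOn_sol (by linarith) h2 le_rfl hπ' fun θ hθ =>
        mul_pos (by linarith) (hcos_pos θ hθ),
      VBeta.strictAntiOn_sol (by linarith) h2 hπ le_rfl fun θ hθ =>
        mul_neg_of_pos_of_neg (by linarith) (hcos_neg θ hθ)⟩
  · exact ⟨VBeta.strictAntiOn_sol h1 (by linarith) le_rfl hπ' fun θ hθ =>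
        mul_neg_of_neg_of_pos (by linarith) (hcos_pos θ hθ),
      VBeta.strictMonoOn_sol h1 (by linarith) hπ le_rfl fun θ hθ =>
        mul_pos_of_neg_of_neg (by linarith) (hcos_neg θ hθ)⟩
end
end

section
/- For every β ∈ [1/2, 2], the function v_β satisfies v_β(0) = (3 − 2β)/(9 β^{3/2}) and v_β(π/2) = (3β − 2)/(9 β²). -/
open Real MeasureTheory Filter Topology Set
open scoped ENNReal RealInnerProductSpace

noncomputable section

/-!
Variation of parameters: if `v'' + 9 v = f`, then `v' sin 3(t - θ) - 3 v cos 3(t - θ)` has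
derivative `f(t) sin 3(t - θ)`. Integrating over one period `[θ, θ + π]`, where `v` returns to its
value while `sin 3π = 0` and `cos 3π = -1`, gives `6 v(θ) = ∫_θ^{θ+π} f(t) sin 3(t - θ) dt`.
For `θ = 0` and `θ = π/2` the integrands `f_β(t) sin 3t` and `f_β(t) cos 3t` have the elementary
antiderivatives `P(cos t) (β cos²t + sin²t)^(-3/2)` and `Q(sin t) (β cos²t + sin²t)^(-3/2)`
with cubic polynomials `P`, `Q`.
-/

theorem six_mul_eq_integral_sin_of_periodic {v f : ℝ → ℝ} (hv : ContDiff ℝ 2 v)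
    (hper : Function.Periodic v π) (hode : ∀ t, deriv (deriv v) t + 9 * v t = f t) (θ : ℝ) :
    6 * v θ = ∫ t in θ..θ + π, f t * sin (3 * (t - θ)) := by
  obtain ⟨hdv, -, hv'⟩ := contDiff_succ_iff_deriv.mp (show ContDiff ℝ (1 + 1) v from hv)
  have hdv' : Differentiable ℝ (deriv v) := hv'.differentiable one_ne_zero
  have hf : Continuous f := by
    rw [← funext hode]
    exact (hv'.continuous_deriv le_rfl).add (continuous_const.mul hv.continuous)
  have hasDeriv : ∀ s, HasDerivAt
      (fun s => deriv v s * sin (3 * (s - θ)) - 3 * v s * cos (3 * (s - θ)))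
      (f s * sin (3 * (s - θ))) s := by
    intro s
    have hlin : HasDerivAt (fun s : ℝ => 3 * (s - θ)) 3 s := by
      simpa using ((hasDerivAt_id s).sub_const θ).const_mul 3
    have hd := ((hdv' s).hasDerivAt.mul ((hasDerivAt_sin _).comp s hlin)).sub
      (((hdv s).hasDerivAt.const_mul 3).mul ((hasDerivAt_cos _).comp s hlin))
    refine hd.congr_deriv ?_
    simp only [Function.comp_apply]
    linear_combination sin (3 * (s - θ)) * hode s
  rw [intervalIntegral.integral_eq_sub_of_hasDerivAt (fun s _ => hasDeriv s)
    ((hf.mul (by fun_prop)).intervalIntegrable _ _)]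
  have h3π : 3 * (θ + π - θ) = π + 2 * π := by ring
  simp only [h3π, sub_self, mul_zero, sin_add_two_pi, cos_add_two_pi, sin_pi, cos_pi, sin_zero,
    cos_zero, hper θ]
  ring

lemma cos_sq_add_sin_sq_pos {β : ℝ} (hβ : 0 < β) (t : ℝ) : 0 < β * cos t ^ 2 + sin t ^ 2 := by
  rcases le_total β 1 with h | h <;>
    nlinarith [sin_sq_add_cos_sq t, mul_nonneg (sub_nonneg.2 h) (sq_nonneg (sin t)),
      mul_nonneg (sub_nonneg.2 h) (sq_nonneg (cos t))]

lemma continuous_fker {β : ℝ} (hβ : 0 < β) : Continuous (fker β) :=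
  (by fun_prop : Continuous fun t => β * cos t ^ 2 + sin t ^ 2).rpow_const
    fun t => Or.inl (cos_sq_add_sin_sq_pos hβ t).ne'

lemma hasDerivAt_mul_cos_sq_add_sin_sq_rpow {β : ℝ} (hβ : 0 < β) {u : ℝ → ℝ} {u' t : ℝ}
    (hu : HasDerivAt u u' t) :
    HasDerivAt (fun t => u t * (β * cos t ^ 2 + sin t ^ 2) ^ (-(3:ℝ)/2))
      ((u' * (β * cos t ^ 2 + sin t ^ 2) - 3 * (1 - β) * sin t * cos t * u t) * fker β t) t := by
  have hpos := cos_sq_add_sin_sq_pos hβ t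
  have hB : HasDerivAt (fun t => β * cos t ^ 2 + sin t ^ 2) (2 * (1 - β) * sin t * cos t) t :=
    ((((hasDerivAt_cos t).pow 2).const_mul β).add ((hasDerivAt_sin t).pow 2)).congr_deriv
      (by ring)
  refine (hu.mul (hB.rpow_const (p := -(3:ℝ)/2) (Or.inl hpos.ne'))).congr_deriv ?_
  have hsplit : (β * cos t ^ 2 + sin t ^ 2) ^ (-(3:ℝ)/2)
      = (β * cos t ^ 2 + sin t ^ 2) * fker β t := by
    rw [fker, show (-(3:ℝ)/2) = 1 + (-(5:ℝ)/2) by norm_num, rpow_add hpos, rpow_one]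
  rw [hsplit, show (-(3:ℝ)/2) - 1 = -(5:ℝ)/2 by norm_num, ← fker]
  ring

lemma integral_fker_mul_sin_three_mul {β : ℝ} (hβ : 0 < β) :
    ∫ t in (0:ℝ)..π, fker β t * sin (3 * t) = 2 * (3 - 2 * β) / (3 * β ^ ((3:ℝ)/2)) := by
  have hasDeriv : ∀ t, HasDerivAt
      (fun t => (3 * cos t - (6 - 2 * β) * cos t ^ 3) * (β * cos t ^ 2 + sin t ^ 2) ^ (-(3:ℝ)/2))
      (3 * (fker β t * sin (3 * t))) t := by
    intro t
    refine (hasDerivAt_mul_cos_sq_add_sin_sq_rpow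
      (u := fun t => 3 * cos t - (6 - 2 * β) * cos t ^ 3) hβ
      (((hasDerivAt_cos t).const_mul 3).sub
        (((hasDerivAt_cos t).pow 3).const_mul (6 - 2 * β)))).congr_deriv ?_
    rw [sin_three_mul]
    linear_combination (3 * sin t * (3 + (6 - 2 * β) * cos t ^ 2) * fker β t) *
      sin_sq_add_cos_sq t
  have hcont : Continuous fun t => 3 * (fker β t * sin (3 * t)) := by
    have := continuous_fker hβ
    fun_prop
  have h := intervalIntegral.integral_eq_sub_of_hasDerivAt (fun t _ => hasDeriv t)
    (hcont.intervalIntegrable 0 π)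
  rw [intervalIntegral.integral_const_mul] at h
  have hrpow : β ^ (-((3:ℝ)/2)) = (β ^ ((3:ℝ)/2))⁻¹ := rpow_neg hβ.le _
  norm_num at h
  rw [hrpow] at h
  have hpow := (rpow_pos_of_pos hβ ((3:ℝ)/2)).ne'
  field_simp at h ⊢
  linarith

lemma integral_fker_mul_cos_three_mul {β : ℝ} (hβ : 0 < β) :
    ∫ t in (π/2)..(π/2 + π), fker β t * cos (3 * t) = 2 * (3 * β - 2) / (3 * β ^ 2) := by
  have hasDeriv : ∀ t, HasDerivAt
      (fun t => (3 * β * sin t + (2 - 6 * β) * sin t ^ 3) *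
        (β * cos t ^ 2 + sin t ^ 2) ^ (-(3:ℝ)/2))
      (3 * β ^ 2 * (fker β t * cos (3 * t))) t := by
    intro t
    refine (hasDerivAt_mul_cos_sq_add_sin_sq_rpow
      (u := fun t => 3 * β * sin t + (2 - 6 * β) * sin t ^ 3) hβ
      (((hasDerivAt_sin t).const_mul (3 * β)).add
        (((hasDerivAt_sin t).pow 3).const_mul (2 - 6 * β)))).congr_deriv ?_
    rw [cos_three_mul]
    linear_combination (cos t * (3 * β * (2 - 6 * β) * sin t ^ 2 - 9 * β ^ 2) * fker β t) *
      sin_sq_add_cos_sq t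
  have hcont : Continuous fun t => 3 * β ^ 2 * (fker β t * cos (3 * t)) := by
    have := continuous_fker hβ
    fun_prop
  have h := intervalIntegral.integral_eq_sub_of_hasDerivAt (fun t _ => hasDeriv t)
    (hcont.intervalIntegrable (π/2) (π/2 + π))
  rw [intervalIntegral.integral_const_mul] at h
  norm_num [sin_add, cos_add] at h
  rw [eq_div_iff (by positivity)]
  linear_combination h

lemma sin_three_mul_sub_pi_div_two (t : ℝ) : sin (3 * (t - π/2)) = cos (3 * t) := by
  rw [show 3 * (t - π/2) = 3 * t - (π + π/2) by ring, sin_sub, sin_add, cos_add]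
  simp

/-- the values of `v_β` at `0` and `π/2`. -/
theorem stmt4 (β : ℝ) (hβ : β ∈ Set.Icc (1/2 : ℝ) 2) (v : ℝ → ℝ) (hv : IsVBeta β v) :
    v 0 = (3 - 2*β) / (9 * β^((3:ℝ)/2)) ∧ v (π/2) = (3*β - 2) / (9 * β^2) := by
  obtain ⟨hC, hper, hode⟩ := hv
  have hβ0 : 0 < β := by linarith [hβ.1]
  have hrep := six_mul_eq_integral_sin_of_periodic hC hper hode
  constructor
  · have h := hrep 0
    simp only [zero_add, sub_zero, integral_fker_mul_sin_three_mul hβ0] at h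
    have hpow := (rpow_pos_of_pos hβ0 ((3:ℝ)/2)).ne'
    field_simp at h ⊢
    linarith
  · have h := hrep (π/2)
    simp only [sin_three_mul_sub_pi_div_two, integral_fker_mul_cos_three_mul hβ0] at h
    field_simp at h ⊢
    linarith
end
end

section
/- For every β ∈ [1/2, 2] and every θ with 0 ≤ θ < π, the function v_β is given by the explicit formula v_β(θ) = (sin 3θ)/3 · ∫₀^θ cos(3x) f_β(x) dx + (cos 3θ)/3 · ∫_θ^{π/2} sin(3x) f_β(x) dx. -/
open Real MeasureTheory Filter Topology Set
open scoped ENNReal RealInnerProductSpace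

noncomputable section

lemma fker_pi_sub (β x : ℝ) : fker β (π - x) = fker β x := by
  simp only [fker, cos_pi_sub, sin_pi_sub, neg_sq]

lemma intervalIntegral.integral_eq_zero_of_reflect_neg {g : ℝ → ℝ} {c : ℝ}
    (hg : ∀ x, g (c - x) = -g x) : ∫ x in (0:ℝ)..c, g x = 0 := by
  have h := intervalIntegral.integral_comp_sub_left g c (a := 0) (b := c)
  simp only [hg, intervalIntegral.integral_neg, sub_self, sub_zero] at h
  linarith

lemma intervalIntegral.integral_eq_two_mul_of_reflect {g : ℝ → ℝ} {c : ℝ}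
    (hint : IntervalIntegrable g volume 0 c) (hg : ∀ x, g (c - x) = g x) :
    ∫ x in (0:ℝ)..c, g x = 2 * ∫ x in (0:ℝ)..(c / 2), g x := by
  have hmid : c / 2 ∈ uIcc 0 c := by
    rcases le_total 0 c with h | h
    · exact mem_uIcc_of_le (by linarith) (by linarith)
    · exact mem_uIcc_of_ge (by linarith) (by linarith)
  have hsplit := intervalIntegral.integral_add_adjacent_intervals
    (hint.mono_set (uIcc_subset_uIcc left_mem_uIcc hmid))
    (hint.mono_set (uIcc_subset_uIcc hmid right_mem_uIcc))
  have hreflect := intervalIntegral.integral_comp_sub_left g c (a := 0) (b := c / 2)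
  simp only [hg, sub_zero, show c - c / 2 = c / 2 by ring] at hreflect
  linarith

lemma Function.Periodic.periodic_of_hasDerivAt {u u' : ℝ → ℝ} {c : ℝ}
    (hper : Function.Periodic u c) (hu : ∀ t, HasDerivAt u (u' t) t) :
    Function.Periodic u' c := fun t =>
  ((hu (t + c)).comp_add_const t c).unique <| by
    rw [show (fun x => u (x + c)) = u from funext hper]
    exact hu t

lemma hasDerivAt_sin_mul (ω t : ℝ) :
    HasDerivAt (fun x => sin (ω * x)) (ω * cos (ω * t)) t := by
  simpa [mul_comm] using ((hasDerivAt_id t).const_mul ω).sin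

lemma hasDerivAt_cos_mul (ω t : ℝ) :
    HasDerivAt (fun x => cos (ω * x)) (-(ω * sin (ω * t))) t := by
  simpa [mul_comm] using ((hasDerivAt_id t).const_mul ω).cos

lemma hasDerivAt_integral_cos_mul {f : ℝ → ℝ} (hf : Continuous f) (ω a t : ℝ) :
    HasDerivAt (fun s => ∫ x in a..s, cos (ω * x) * f x) (cos (ω * t) * f t) t :=
  ((by fun_prop : Continuous fun x => cos (ω * x) * f x).integral_hasStrictDerivAt
    a t).hasDerivAt

lemma hasDerivAt_integral_sin_mul_left {f : ℝ → ℝ} (hf : Continuous f) (ω b t : ℝ) :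
    HasDerivAt (fun s => ∫ x in s..b, sin (ω * x) * f x) (-(sin (ω * t) * f t)) t := by
  simp_rw [intervalIntegral.integral_symm b]
  exact ((by fun_prop : Continuous fun x => sin (ω * x) * f x).integral_hasStrictDerivAt
    b t).hasDerivAt.neg

def variationOfParameters (ω a b : ℝ) (f : ℝ → ℝ) (t : ℝ) : ℝ :=
  sin (ω * t) / ω * (∫ x in a..t, cos (ω * x) * f x)
    + cos (ω * t) / ω * (∫ x in t..b, sin (ω * x) * f x)

def variationOfParametersDeriv (ω a b : ℝ) (f : ℝ → ℝ) (t : ℝ) : ℝ :=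
  cos (ω * t) * (∫ x in a..t, cos (ω * x) * f x)
    - sin (ω * t) * (∫ x in t..b, sin (ω * x) * f x)

section ForcedOscillator

variable {ω : ℝ} {f u u' : ℝ → ℝ}

/-- Conservation of the energy `(p')² + ω² p²` for the difference `p` of two solutions. -/
theorem eq_of_forced_oscillator (hω : ω ≠ 0) {w w' : ℝ → ℝ}
    (hu : ∀ t, HasDerivAt u (u' t) t) (hu' : ∀ t, HasDerivAt u' (f t - ω ^ 2 * u t) t)
    (hw : ∀ t, HasDerivAt w (w' t) t) (hw' : ∀ t, HasDerivAt w' (f t - ω ^ 2 * w t) t)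
    (h0 : u 0 = w 0) (h0' : u' 0 = w' 0) (t : ℝ) : u t = w t := by
  set E : ℝ → ℝ := fun s => (u' s - w' s) ^ 2 + ω ^ 2 * (u s - w s) ^ 2
  have hE : ∀ s, HasDerivAt E 0 s := fun s => by
    refine ((((hu' s).fun_sub (hw' s)).fun_pow 2).fun_add
      ((((hu s).fun_sub (hw s)).fun_pow 2).const_mul (ω ^ 2))).congr_deriv ?_
    ring
  have hEt : E t = 0 := by
    rw [is_const_of_deriv_eq_zero (fun s => (hE s).differentiableAt) (fun s => (hE s).deriv) t 0]
    simp [E, h0, h0']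
  have hsq : ω ^ 2 * (u t - w t) ^ 2 = 0 := by
    nlinarith [sq_nonneg (u' t - w' t), mul_nonneg (sq_nonneg ω) (sq_nonneg (u t - w t))]
  simpa [hω, sub_eq_zero] using hsq

lemma integral_cos_mul_eq_of_forced_oscillator {a b : ℝ}
    (hu : ∀ t, HasDerivAt u (u' t) t) (hu' : ∀ t, HasDerivAt u' (f t - ω ^ 2 * u t) t)
    (hf : IntervalIntegrable f volume a b) :
    ∫ x in a..b, cos (ω * x) * f x
      = (u' b * cos (ω * b) + ω * u b * sin (ω * b))
        - (u' a * cos (ω * a) + ω * u a * sin (ω * a)) := by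
  refine intervalIntegral.integral_eq_sub_of_hasDerivAt
    (f := fun x => u' x * cos (ω * x) + ω * u x * sin (ω * x)) (fun x _ => ?_)
    (hf.continuousOn_mul (g := fun x => cos (ω * x)) (by fun_prop))
  refine (((hu' x).fun_mul (hasDerivAt_cos_mul ω x)).fun_add
    (((hu x).const_mul ω).fun_mul (hasDerivAt_sin_mul ω x))).congr_deriv ?_
  ring

lemma integral_sin_mul_eq_of_forced_oscillator {a b : ℝ}
    (hu : ∀ t, HasDerivAt u (u' t) t) (hu' : ∀ t, HasDerivAt u' (f t - ω ^ 2 * u t) t)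
    (hf : IntervalIntegrable f volume a b) :
    ∫ x in a..b, sin (ω * x) * f x
      = (u' b * sin (ω * b) - ω * u b * cos (ω * b))
        - (u' a * sin (ω * a) - ω * u a * cos (ω * a)) := by
  refine intervalIntegral.integral_eq_sub_of_hasDerivAt
    (f := fun x => u' x * sin (ω * x) - ω * u x * cos (ω * x)) (fun x _ => ?_)
    (hf.continuousOn_mul (g := fun x => sin (ω * x)) (by fun_prop))
  refine (((hu' x).fun_mul (hasDerivAt_sin_mul ω x)).fun_sub
    (((hu x).const_mul ω).fun_mul (hasDerivAt_cos_mul ω x))).congr_deriv ?_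
  ring

variable (a b : ℝ)

lemma hasDerivAt_variationOfParameters (hω : ω ≠ 0) (hf : Continuous f) (t : ℝ) :
    HasDerivAt (variationOfParameters ω a b f) (variationOfParametersDeriv ω a b f t) t := by
  refine ((((hasDerivAt_sin_mul ω t).div_const ω).fun_mul
    (hasDerivAt_integral_cos_mul hf ω a t)).fun_add
    (((hasDerivAt_cos_mul ω t).div_const ω).fun_mul
    (hasDerivAt_integral_sin_mul_left hf ω b t))).congr_deriv ?_
  simp only [variationOfParametersDeriv]
  field_simp
  ring

lemma hasDerivAt_variationOfParametersDeriv (hf : Continuous f) (t : ℝ) :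
    HasDerivAt (variationOfParametersDeriv ω a b f)
      (f t - ω ^ 2 * variationOfParameters ω a b f t) t := by
  refine (((hasDerivAt_cos_mul ω t).fun_mul (hasDerivAt_integral_cos_mul hf ω a t)).fun_sub
    ((hasDerivAt_sin_mul ω t).fun_mul
      (hasDerivAt_integral_sin_mul_left hf ω b t))).congr_deriv ?_
  simp only [variationOfParameters]
  field_simp
  linear_combination f t * sin_sq_add_cos_sq (ω * t)

end ForcedOscillator

lemma cos_three_mul_pi_sub (x : ℝ) : cos (3 * (π - x)) = -cos (3 * x) := by
  rw [show 3 * (π - x) = ((3 : ℕ) : ℝ) * π - 3 * x by push_cast; ring, cos_nat_mul_pi_sub]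
  norm_num

lemma sin_three_mul_pi_sub (x : ℝ) : sin (3 * (π - x)) = sin (3 * x) := by
  rw [show 3 * (π - x) = ((3 : ℕ) : ℝ) * π - 3 * x by push_cast; ring, sin_nat_mul_pi_sub]
  norm_num

lemma cos_three_mul_pi : cos (3 * π) = -1 := by simpa using cos_three_mul_pi_sub 0

lemma sin_three_mul_pi : sin (3 * π) = 0 := by simpa using sin_three_mul_pi_sub 0

lemma deriv_eq_zero_of_periodic_of_forced_oscillator {f u u' : ℝ → ℝ}
    (hf : IntervalIntegrable f volume 0 π) (hsymm : ∀ x, f (π - x) = f x)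
    (hper : Function.Periodic u π) (hu : ∀ t, HasDerivAt u (u' t) t)
    (hu' : ∀ t, HasDerivAt u' (f t - 3 ^ 2 * u t) t) : u' 0 = 0 := by
  have hibp := integral_cos_mul_eq_of_forced_oscillator hu hu' hf
  rw [intervalIntegral.integral_eq_zero_of_reflect_neg
    fun x => by rw [cos_three_mul_pi_sub, hsymm, neg_mul]] at hibp
  have hu'π : u' π = u' 0 := by simpa using hper.periodic_of_hasDerivAt hu 0
  simp only [hu'π, cos_three_mul_pi, sin_three_mul_pi, mul_zero, cos_zero, sin_zero] at hibp
  linarith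

lemma eq_integral_of_periodic_of_forced_oscillator {f u u' : ℝ → ℝ}
    (hf : IntervalIntegrable f volume 0 π) (hsymm : ∀ x, f (π - x) = f x)
    (hper : Function.Periodic u π) (hu : ∀ t, HasDerivAt u (u' t) t)
    (hu' : ∀ t, HasDerivAt u' (f t - 3 ^ 2 * u t) t) :
    u 0 = 3⁻¹ * ∫ x in (0:ℝ)..(π / 2), sin (3 * x) * f x := by
  have hibp := integral_sin_mul_eq_of_forced_oscillator hu hu' hf
  rw [intervalIntegral.integral_eq_two_mul_of_reflect
    (hf.continuousOn_mul (g := fun x => sin (3 * x)) (by fun_prop))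
    fun x => by rw [sin_three_mul_pi_sub, hsymm]] at hibp
  have huπ : u π = u 0 := by simpa using hper 0
  simp only [huπ, cos_three_mul_pi, sin_three_mul_pi, mul_zero, cos_zero, sin_zero] at hibp
  linarith

theorem stmt5_general (β : ℝ) (hβ : β ∈ Set.Icc (1/2 : ℝ) 2) (v : ℝ → ℝ) (hv : IsVBeta β v)
    (θ : ℝ) :
    v θ = Real.sin (3*θ) / 3 * (∫ x in (0:ℝ)..θ, Real.cos (3*x) * fker β x)
        + Real.cos (3*θ) / 3 * (∫ x in θ..(π/2), Real.sin (3*x) * fker β x) := by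
  obtain ⟨hC2, hper, hode⟩ := hv
  have hf : Continuous (fker β) := continuous_fker (by linarith [hβ.1])
  have hv' : ∀ t, HasDerivAt v (deriv v t) t := fun t =>
    (hC2.differentiable two_ne_zero t).hasDerivAt
  have hv'' : ∀ t, HasDerivAt (deriv v) (fker β t - 3 ^ 2 * v t) t := fun t => by
    refine ((hC2.deriv' (n := 1)).differentiable one_ne_zero t).hasDerivAt.congr_deriv ?_
    linarith [hode t]
  have hfi : IntervalIntegrable (fker β) volume 0 π := hf.intervalIntegrable 0 π
  refine eq_of_forced_oscillator three_ne_zero hv' hv''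
    (hasDerivAt_variationOfParameters 0 (π / 2) three_ne_zero hf)
    (hasDerivAt_variationOfParametersDeriv 0 (π / 2) hf) ?_ ?_ θ
  · simp [variationOfParameters,
      eq_integral_of_periodic_of_forced_oscillator hfi (fker_pi_sub β) hper hv' hv'']
  · simp [variationOfParametersDeriv,
      deriv_eq_zero_of_periodic_of_forced_oscillator hfi (fker_pi_sub β) hper hv' hv'']

/-- explicit formula for `v_β` on `[0, π)`. -/
theorem stmt5 (β : ℝ) (hβ : β ∈ Set.Icc (1/2 : ℝ) 2) (v : ℝ → ℝ) (hv : IsVBeta β v)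
    (θ : ℝ) (hθ : θ ∈ Set.Ico 0 π) :
    v θ = Real.sin (3*θ) / 3 * (∫ x in (0:ℝ)..θ, Real.cos (3*x) * fker β x)
        + Real.cos (3*θ) / 3 * (∫ x in θ..(π/2), Real.sin (3*x) * fker β x) :=
  stmt5_general β hβ v hv θ
end
end

section
/- Let 2/3 < β < 3/2 and let g : ℝ² → ℝ be a bounded C² function with bounded second derivatives which is not constant. If g attains its global minimum at a point w_m ∈ ℝ², then L̄ g(w_m) < 0; if g attains its global maximum at a point w_M ∈ ℝ², then L̄ g(w_M) > 0. -/
open Real MeasureTheory Filter Topology Set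
open scoped ENNReal RealInnerProductSpace

noncomputable section

abbrev R2 : Type := EuclideanSpace ℝ (Fin 2)

/-- The anisotropic kernel `K̄(x) = 9 v(θ(x)) / |x|³`, with `θ(x)` a polar angle of `x`
(chosen as `Complex.arg`; the choice is immaterial since `v` is π-periodic). -/
def Kbar (v : ℝ → ℝ) (x : R2) : ℝ :=
  9 * v (Complex.arg ((x 0 : ℂ) + (x 1 : ℂ) * Complex.I)) / ‖x‖^3

/-- The nonlocal operator `L̄ g(x) = -(1/(4π)) ∫ (g(x+y)+g(x−y)−2g(x)) K̄(y) dy`. -/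
def Lop (v : ℝ → ℝ) (g : R2 → ℝ) (x : R2) : ℝ :=
  -(1/(4*π)) * ∫ y : R2, (g (x + y) + g (x - y) - 2 * g x) * Kbar v y

/-- `D_R = (ℝ²×ℝ²) \ (B_Rᶜ × B_Rᶜ)`. -/
def DR (R : ℝ) : Set (R2 × R2) := ((Metric.ball (0:R2) R)ᶜ ×ˢ (Metric.ball (0:R2) R)ᶜ)ᶜ

/-- The nonlocal energy `ℰ(u; B_R) = ∬_{D_R} |u(x)−u(y)|² K̄(x−y) dx dy`. -/
def nEnergy (v : ℝ → ℝ) (u : R2 → ℝ) (R : ℝ) : ℝ≥0∞ :=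
  ∫⁻ p in DR R, ENNReal.ofReal (|u p.1 - u p.2|^2 * Kbar v (p.1 - p.2))


/-!
Variation of constants on a period gives `v_β` in closed form:
`9 β² v_β(a) = B(cos² a, sin² a) · (β cos² a + sin² a) ^ (-3/2)`, where the cubic `B` has
Bernstein coefficients `β²(3 - 2β)`, `β(2β² - 4β + 3)`, `3β² - 4β + 2`, `3β - 2`, all positive
exactly when `2/3 < β < 3/2`. Hence `K̄_β > 0` off the origin. At a global minimum `w` of `g` the
second difference `g(w + y) + g(w - y) - 2 g(w)` is nonnegative, is `O(|y|²)` near `0` and bounded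
at infinity (so integrable against `K̄_β ≲ |y|⁻³` in the plane), and is positive on a nonempty open
set since `g` is not constant; so `L̄ g(w) < 0`. Maxima are minima of `-g`.
-/
open Function

def fkerBase (β θ : ℝ) : ℝ := β * cos θ ^ 2 + sin θ ^ 2

lemma fkerBase_pos {β : ℝ} (hβ : 0 < β) (θ : ℝ) : 0 < fkerBase β θ := by
  have h := sin_sq_add_cos_sq θ
  unfold fkerBase
  rcases le_total β 1 with hβ1 | hβ1 <;> nlinarith [sq_nonneg (cos θ), sq_nonneg (sin θ)]

lemma hasDerivAt_mul_fkerBase_rpow {β : ℝ} (hβ : 0 < β) {u : ℝ → ℝ} {u' θ : ℝ}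
    (hu : HasDerivAt u u' θ) :
    HasDerivAt (fun x => u x * fkerBase β x ^ (-(3:ℝ)/2))
      ((u' * fkerBase β θ - 3 / 2 * u θ * (2 * (1 - β) * sin θ * cos θ)) * fker β θ) θ := by
  have hQ : HasDerivAt (fkerBase β) (2 * (1 - β) * sin θ * cos θ) θ :=
    ((((hasDerivAt_cos θ).fun_pow 2).const_mul β).add ((hasDerivAt_sin θ).fun_pow 2)).congr_deriv
      (by ring)
  have hQpos := fkerBase_pos hβ θ
  have hsplit : fkerBase β θ ^ (-(3:ℝ)/2) = fkerBase β θ * fker β θ := by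
    rw [show -(3:ℝ)/2 = 1 + -(5:ℝ)/2 by norm_num, rpow_add hQpos, rpow_one]
    rfl
  refine (hu.mul (hQ.rpow_const (Or.inl hQpos.ne'))).congr_deriv ?_
  rw [hsplit, show -(3:ℝ)/2 - 1 = -(5:ℝ)/2 by norm_num]
  unfold fker fkerBase
  ring

def fkerSinPrim (β θ : ℝ) : ℝ :=
  cos θ * ((2 * β - 3) * cos θ ^ 2 + 3 * sin θ ^ 2) * fkerBase β θ ^ (-(3:ℝ)/2)

def fkerCosPrim (β θ : ℝ) : ℝ :=
  sin θ * (3 * β * cos θ ^ 2 + (2 - 3 * β) * sin θ ^ 2) * fkerBase β θ ^ (-(3:ℝ)/2)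

lemma hasDerivAt_fkerSinPrim {β : ℝ} (hβ : 0 < β) (θ : ℝ) :
    HasDerivAt (fkerSinPrim β) (3 * (fker β θ * sin (3 * θ))) θ := by
  have hu : HasDerivAt (fun x => cos x * ((2 * β - 3) * cos x ^ 2 + 3 * sin x ^ 2))
      (-sin θ * ((2 * β - 3) * cos θ ^ 2 + 3 * sin θ ^ 2)
        + cos θ * ((2 * β - 3) * (2 * cos θ * -sin θ) + 3 * (2 * sin θ * cos θ))) θ :=
    ((hasDerivAt_cos θ).fun_mul ((((hasDerivAt_cos θ).fun_pow 2).const_mul _).fun_add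
      (((hasDerivAt_sin θ).fun_pow 2).const_mul _))).congr_deriv (by ring)
  refine (hasDerivAt_mul_fkerBase_rpow hβ hu).congr_deriv ?_
  rw [sin_three_mul]
  unfold fkerBase
  linear_combination (fker β θ * (9 * sin θ + 9 * sin θ * cos θ ^ 2 - 3 * sin θ ^ 3)) *
    sin_sq_add_cos_sq θ

lemma hasDerivAt_fkerCosPrim {β : ℝ} (hβ : 0 < β) (θ : ℝ) :
    HasDerivAt (fkerCosPrim β) (3 * β ^ 2 * (fker β θ * cos (3 * θ))) θ := by
  have hu : HasDerivAt (fun x => sin x * (3 * β * cos x ^ 2 + (2 - 3 * β) * sin x ^ 2))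
      (cos θ * (3 * β * cos θ ^ 2 + (2 - 3 * β) * sin θ ^ 2)
        + sin θ * (3 * β * (2 * cos θ * -sin θ) + (2 - 3 * β) * (2 * sin θ * cos θ))) θ :=
    ((hasDerivAt_sin θ).fun_mul ((((hasDerivAt_cos θ).fun_pow 2).const_mul _).fun_add
      (((hasDerivAt_sin θ).fun_pow 2).const_mul _))).congr_deriv (by ring)
  refine (hasDerivAt_mul_fkerBase_rpow hβ hu).congr_deriv ?_
  rw [cos_three_mul]
  unfold fkerBase
  linear_combination (fker β θ * β ^ 2 * (-9 * cos θ + 3 * cos θ ^ 3 - 9 * sin θ ^ 2 * cos θ)) *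
    sin_sq_add_cos_sq θ

lemma fkerSinPrim_antiperiodic (β : ℝ) : Antiperiodic (fkerSinPrim β) π := by
  intro θ
  simp only [fkerSinPrim, fkerBase, cos_add_pi, sin_add_pi, neg_sq]
  ring

lemma fkerCosPrim_antiperiodic (β : ℝ) : Antiperiodic (fkerCosPrim β) π := by
  intro θ
  simp only [fkerCosPrim, fkerBase, cos_add_pi, sin_add_pi, neg_sq]
  ring

lemma six_mul_eq_of_periodic_of_deriv_deriv_add_nine_mul {v f F G : ℝ → ℝ}
    (hv : ContDiff ℝ 2 v) (hper : Periodic v π)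
    (hode : ∀ θ, deriv (deriv v) θ + 9 * v θ = f θ)
    (hF : ∀ θ, HasDerivAt F (f θ * sin (3 * θ)) θ)
    (hG : ∀ θ, HasDerivAt G (f θ * cos (3 * θ)) θ) (a : ℝ) :
    6 * v a = cos (3 * a) * (F (a + π) - F a) - sin (3 * a) * (G (a + π) - G a) := by
  have hv' : Differentiable ℝ v := hv.differentiable (by norm_num)
  have hv'' : Differentiable ℝ (deriv v) := hv.differentiable_deriv_two
  -- the first two terms of `Φ` form a primitive of `f x * sin (3 * x - 3 * a)`
  let Φ x := deriv v x * sin (3 * x - 3 * a) - 3 * v x * cos (3 * x - 3 * a)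
    - (cos (3 * a) * F x - sin (3 * a) * G x)
  have hΦ : ∀ x, HasDerivAt Φ 0 x := by
    intro x
    have hlin : HasDerivAt (fun x => 3 * x - 3 * a) 3 x := by
      simpa using ((hasDerivAt_id x).const_mul 3).sub_const (3 * a)
    refine ((((hv'' x).hasDerivAt.mul hlin.sin).sub
      (((hv' x).hasDerivAt.const_mul 3).mul hlin.cos)).sub
      (((hF x).const_mul _).sub ((hG x).const_mul _))).congr_deriv ?_
    linear_combination sin (3 * x - 3 * a) * hode x + f x * sin_sub (3 * x) (3 * a)
  have hconst := is_const_of_deriv_eq_zero (fun x => (hΦ x).differentiableAt)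
    (fun x => (hΦ x).deriv) (a + π) a
  have h3π : 3 * (a + π) - 3 * a = (3 : ℕ) * π := by push_cast; ring
  simp only [Φ, h3π, sin_nat_mul_pi, cos_nat_mul_pi, sub_self, sin_zero, cos_zero, hper a] at hconst
  linear_combination hconst

lemma IsVBeta.mul_eq_cubic_mul_rpow {β : ℝ} {v : ℝ → ℝ} (hβ : 0 < β) (hv : IsVBeta β v) (a : ℝ) :
    9 * β ^ 2 * v a =
      (β ^ 2 * (3 - 2 * β) * (cos a ^ 2) ^ 3
        + 3 * β * (2 * β ^ 2 - 4 * β + 3) * (cos a ^ 2) ^ 2 * sin a ^ 2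
        + 3 * (3 * β ^ 2 - 4 * β + 2) * cos a ^ 2 * (sin a ^ 2) ^ 2
        + (3 * β - 2) * (sin a ^ 2) ^ 3) * fkerBase β a ^ (-(3:ℝ)/2) := by
  obtain ⟨hC2, hper, hode⟩ := hv
  have h6 := six_mul_eq_of_periodic_of_deriv_deriv_add_nine_mul hC2 hper hode
    (fun θ => ((hasDerivAt_fkerSinPrim hβ θ).div_const 3).congr_deriv (by ring))
    (fun θ => ((hasDerivAt_fkerCosPrim hβ θ).div_const (3 * β ^ 2)).congr_deriv
      (by field_simp)) a
  simp only [fkerSinPrim_antiperiodic β a, fkerCosPrim_antiperiodic β a] at h6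
  have hrep : 9 * β ^ 2 * v a =
      sin (3 * a) * fkerCosPrim β a - β ^ 2 * (cos (3 * a) * fkerSinPrim β a) := by
    field_simp at h6
    linear_combination h6 / 2
  rw [hrep, fkerSinPrim, fkerCosPrim, sin_three_mul, cos_three_mul]
  linear_combination (fkerBase β a ^ (-(3:ℝ)/2) * (9 * cos a ^ 4 * β ^ 2 - 6 * cos a ^ 4 * β ^ 3
    - 9 * sin a ^ 2 * cos a ^ 2 * β - 9 * sin a ^ 2 * cos a ^ 2 * β ^ 2 - 6 * sin a ^ 4
    + 9 * sin a ^ 4 * β)) * sin_sq_add_cos_sq a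

lemma bernstein_cubic_pos {β c s : ℝ} (hβ₁ : 2 / 3 < β) (hβ₂ : β < 3 / 2) (hc : 0 ≤ c)
    (hs : 0 ≤ s) (hcs : c + s = 1) :
    0 < β ^ 2 * (3 - 2 * β) * c ^ 3 + 3 * β * (2 * β ^ 2 - 4 * β + 3) * c ^ 2 * s
      + 3 * (3 * β ^ 2 - 4 * β + 2) * c * s ^ 2 + (3 * β - 2) * s ^ 3 := by
  have hβ : 0 < β := by linarith
  have hk₀ : 0 < β ^ 2 * (3 - 2 * β) := mul_pos (pow_pos hβ 2) (by linarith)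
  have hk₁ : 0 < 3 * β * (2 * β ^ 2 - 4 * β + 3) :=
    mul_pos (by positivity) (by nlinarith [sq_nonneg (β - 1)])
  have hk₂ : 0 < 3 * (3 * β ^ 2 - 4 * β + 2) :=
    mul_pos three_pos (by nlinarith [sq_nonneg (3 * β - 2)])
  have hk₃ : 0 < 3 * β - 2 := by linarith
  have hends : 0 < β ^ 2 * (3 - 2 * β) * c ^ 3 + (3 * β - 2) * s ^ 3 := by
    rcases hc.eq_or_lt with rfl | hc
    · rw [show s = 1 by linarith]
      linarith
    · linarith [mul_pos hk₀ (pow_pos hc 3), mul_nonneg hk₃.le (pow_nonneg hs 3)]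
  linarith [mul_nonneg (mul_nonneg hk₁.le (pow_nonneg hc 2)) hs,
    mul_nonneg (mul_nonneg hk₂.le hc) (pow_nonneg hs 2)]

lemma IsVBeta.pos {β : ℝ} {v : ℝ → ℝ} (hβ₁ : 2 / 3 < β) (hβ₂ : β < 3 / 2) (hv : IsVBeta β v)
    (a : ℝ) : 0 < v a := by
  have hβ : 0 < β := by linarith
  have h := hv.mul_eq_cubic_mul_rpow hβ a
  have hrhs := mul_pos (bernstein_cubic_pos hβ₁ hβ₂ (sq_nonneg (cos a)) (sq_nonneg (sin a))
    (cos_sq_add_sin_sq a)) (rpow_pos_of_pos (fkerBase_pos hβ a) (-(3:ℝ)/2))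
  rw [← h] at hrhs
  exact pos_of_mul_pos_right hrhs (by positivity)

section SecondDifference

variable {E : Type*} [NormedAddCommGroup E] [NormedSpace ℝ E]

lemma norm_fderiv_fderiv_le {g : E → ℝ} {C : ℝ} (hC : ∀ z, ‖iteratedFDeriv ℝ 2 g z‖ ≤ C)
    (z : E) : ‖fderiv ℝ (fderiv ℝ g) z‖ ≤ C := by
  rw [← norm_iteratedFDeriv_one (𝕜 := ℝ), norm_iteratedFDeriv_fderiv]
  exact hC z

lemma abs_add_add_sub_two_mul_le {g : E → ℝ} (hg : ContDiff ℝ 2 g) {C : ℝ}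
    (hC : ∀ z, ‖iteratedFDeriv ℝ 2 g z‖ ≤ C) (x y : E) :
    |g (x + y) + g (x - y) - 2 * g x| ≤ 2 * C * ‖y‖ ^ 2 := by
  have hg' : Differentiable ℝ g := hg.differentiable (by norm_num)
  have hg'' : Differentiable ℝ (fderiv ℝ g) :=
    (hg.fderiv_right (m := 1) (by norm_num)).differentiable (by norm_num)
  have hC0 : 0 ≤ C := (norm_nonneg _).trans (hC x)
  have hlip : ∀ u w : E, ‖fderiv ℝ g u - fderiv ℝ g w‖ ≤ C * ‖u - w‖ := fun u w =>
    convex_univ.norm_image_sub_le_of_norm_fderiv_le (fun z _ => hg'' z)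
      (fun z _ => norm_fderiv_fderiv_le hC z) (mem_univ w) (mem_univ u)
  let φ (t : ℝ) := g (x + t • y) + g (x - t • y)
  let φ' (t : ℝ) := fderiv ℝ g (x + t • y) y - fderiv ℝ g (x - t • y) y
  have hφ : ∀ t, HasDerivAt φ (φ' t) t := by
    intro t
    have hplus : HasDerivAt (fun t : ℝ => x + t • y) y t := by
      simpa using ((hasDerivAt_id t).smul_const y).const_add x
    have hminus : HasDerivAt (fun t : ℝ => x - t • y) (-y) t := by
      simpa using ((hasDerivAt_id t).smul_const y).const_sub x
    refine ((hg' _).hasFDerivAt.comp_hasDerivAt t hplus).add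
      ((hg' _).hasFDerivAt.comp_hasDerivAt t hminus) |>.congr_deriv ?_
    simp [φ', sub_eq_add_neg]
  have hφ' : ∀ t ∈ Ico (0:ℝ) 1, ‖φ' t‖ ≤ 2 * C * ‖y‖ ^ 2 := by
    rintro t ⟨ht₀, ht₁⟩
    calc ‖φ' t‖ = ‖(fderiv ℝ g (x + t • y) - fderiv ℝ g (x - t • y)) y‖ := rfl
      _ ≤ C * ‖(x + t • y) - (x - t • y)‖ * ‖y‖ :=
          (ContinuousLinearMap.le_opNorm _ _).trans (by gcongr; exact hlip _ _)
      _ = 2 * t * C * ‖y‖ ^ 2 := by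
          rw [show (x + t • y) - (x - t • y) = (2 * t) • y by module, norm_smul,
            Real.norm_of_nonneg (by positivity)]
          ring
      _ ≤ 2 * C * ‖y‖ ^ 2 := by
          have : 0 ≤ 2 * C * ‖y‖ ^ 2 := by positivity
          nlinarith
  have := norm_image_sub_le_of_norm_deriv_le_segment' (fun t _ => (hφ t).hasDerivWithinAt) hφ'
    1 (right_mem_Icc.2 zero_le_one)
  simp only [φ, one_smul, zero_smul, add_zero, sub_zero, Real.norm_eq_abs, mul_one] at this
  rwa [two_mul]

end SecondDifference

section Integrability

open Module Metric

variable {E : Type*} [NormedAddCommGroup E] [NormedSpace ℝ E] [FiniteDimensional ℝ E]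
  [MeasurableSpace E] [BorelSpace E] {μ : Measure E} [μ.IsAddHaarMeasure]

lemma integrable_mul_of_abs_le_of_abs_le_div_pow (hE : 1 ≤ finrank ℝ E) {d K : E → ℝ}
    (hdK : AEStronglyMeasurable (fun y => d y * K y) μ) {C₁ C₂ M : ℝ} (hM : 0 ≤ M)
    (hd₁ : ∀ y, |d y| ≤ C₁) (hd₂ : ∀ y, |d y| ≤ C₂ * ‖y‖ ^ 2)
    (hK : ∀ y, |K y| ≤ M / ‖y‖ ^ (finrank ℝ E + 1)) :
    Integrable (fun y => d y * K y) μ := by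
  set n := finrank ℝ E
  have hC₁ : 0 ≤ C₁ := (abs_nonneg _).trans (hd₁ 0)
  have hC₂ : 0 ≤ C₂ := by
    have : Nontrivial E := Module.nontrivial_of_finrank_pos (R := ℝ) hE
    obtain ⟨z, hz⟩ := exists_ne (0 : E)
    exact nonneg_of_mul_nonneg_left ((abs_nonneg _).trans (hd₂ z)) (by positivity)
  rw [← integrableOn_univ, ← union_compl_self (ball (0 : E) 1)]
  refine IntegrableOn.union ?_ ?_
  · refine integrableOn_ball_of_norm_le_rpow (C := C₂ * M) (α := n - 1) hE (by linarith)
      (ae_of_all _ fun y => ?_) hdK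
    rcases eq_or_ne y 0 with rfl | hy
    · have : d 0 = 0 := abs_nonpos_iff.1 (by simpa using hd₂ 0)
      simp only [this, zero_mul, norm_zero]
      exact mul_nonneg (mul_nonneg hC₂ hM) (rpow_nonneg le_rfl _)
    · have hy₀ : 0 < ‖y‖ := norm_pos_iff.2 hy
      have hpow : ‖y‖ ^ (-((n : ℝ) - 1)) * ‖y‖ ^ (n + 1) = ‖y‖ ^ 2 := by
        rw [← rpow_natCast, ← rpow_natCast, ← rpow_add hy₀]
        push_cast
        ring_nf
      calc ‖d y * K y‖ = |d y| * |K y| := by rw [Real.norm_eq_abs, abs_mul]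
        _ ≤ C₂ * ‖y‖ ^ 2 * (M / ‖y‖ ^ (n + 1)) :=
          mul_le_mul (hd₂ y) (hK y) (abs_nonneg _) (by positivity)
        _ = C₂ * M * ‖y‖ ^ (-((n : ℝ) - 1)) := by
          rw [← hpow]; field_simp
  · have hdecay : Integrable (fun y : E => (1 + ‖y‖) ^ (-((n + 1 : ℕ) : ℝ))) μ :=
      integrable_one_add_norm (by push_cast; linarith)
    refine ((hdecay.const_mul (2 ^ (n + 1) * C₁ * M)).integrableOn).mono' hdK.restrict ?_
    refine (ae_restrict_iff' measurableSet_ball.compl).2 (ae_of_all _ fun y hy => ?_)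
    have hy₁ : 1 ≤ ‖y‖ := by simpa using hy
    have hy₀ : 0 < ‖y‖ := one_pos.trans_le hy₁
    rw [rpow_neg (by positivity), rpow_natCast]
    calc ‖d y * K y‖ = |d y| * |K y| := by rw [Real.norm_eq_abs, abs_mul]
      _ ≤ C₁ * (M / ‖y‖ ^ (n + 1)) := mul_le_mul (hd₁ y) (hK y) (abs_nonneg _) hC₁
      _ ≤ C₁ * (M / ((1 + ‖y‖) / 2) ^ (n + 1)) := by gcongr; linarith
      _ = 2 ^ (n + 1) * C₁ * M * ((1 + ‖y‖) ^ (n + 1))⁻¹ := by rw [div_pow]; field_simp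

end Integrability

lemma measurable_Kbar {v : ℝ → ℝ} (hv : Measurable v) : Measurable (Kbar v) := by
  unfold Kbar
  fun_prop

lemma abs_Kbar_le {v : ℝ → ℝ} {M : ℝ} (hM : ∀ θ, |v θ| ≤ M) (y : R2) :
    |Kbar v y| ≤ 9 * M / ‖y‖ ^ 3 := by
  rw [Kbar, abs_div, abs_mul, abs_of_nonneg (by positivity : (0:ℝ) ≤ ‖y‖ ^ 3)]
  gcongr
  · norm_num
  · exact hM _

lemma Kbar_pos {v : ℝ → ℝ} (hv : ∀ θ, 0 < v θ) {y : R2} (hy : y ≠ 0) : 0 < Kbar v y := by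
  have := hv (Complex.arg ((y 0 : ℂ) + (y 1 : ℂ) * Complex.I))
  have := norm_pos_iff.2 hy
  unfold Kbar
  positivity

lemma Kbar_nonneg {v : ℝ → ℝ} (hv : ∀ θ, 0 ≤ v θ) (y : R2) : 0 ≤ Kbar v y := by
  have := hv (Complex.arg ((y 0 : ℂ) + (y 1 : ℂ) * Complex.I))
  unfold Kbar
  positivity

lemma Lop_neg (v : ℝ → ℝ) (g : R2 → ℝ) (x : R2) : Lop v (-g) x = -Lop v g x := by
  simp only [Lop, Pi.neg_apply]
  rw [← mul_neg, ← integral_neg]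
  congr with y
  ring

lemma integrable_secondDiff_mul_Kbar {v : ℝ → ℝ} (hvm : Measurable v) {M : ℝ}
    (hM : ∀ θ, |v θ| ≤ M) {g : R2 → ℝ} (hg : ContDiff ℝ 2 g) {Cg C : ℝ}
    (hCg : ∀ x, |g x| ≤ Cg) (hC : ∀ x, ‖iteratedFDeriv ℝ 2 g x‖ ≤ C) (w : R2) :
    Integrable (fun y => (g (w + y) + g (w - y) - 2 * g w) * Kbar v y) := by
  have hgc := hg.continuous
  have hd₁ : ∀ y, |g (w + y) + g (w - y) - 2 * g w| ≤ 4 * Cg := fun y => by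
    have := abs_le.1 (hCg (w + y)); have := abs_le.1 (hCg (w - y)); have := abs_le.1 (hCg w)
    exact abs_le.2 ⟨by linarith, by linarith⟩
  refine integrable_mul_of_abs_le_of_abs_le_div_pow (M := 9 * M) (by simp) ?_
    (by linarith [(abs_nonneg _).trans (hM 0)]) hd₁ (abs_add_add_sub_two_mul_le hg hC w)
    (by simpa using abs_Kbar_le hM)
  exact (Continuous.measurable (by fun_prop)).mul (measurable_Kbar hvm) |>.aestronglyMeasurable

lemma Lop_lt_zero_of_forall_le {v : ℝ → ℝ} (hvm : Measurable v) (hvb : ∃ M, ∀ θ, |v θ| ≤ M)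
    (hvpos : ∀ θ, 0 < v θ) {g : R2 → ℝ} (hg : ContDiff ℝ 2 g) (hgb : ∃ C, ∀ x, |g x| ≤ C)
    (hg2b : ∃ C, ∀ x, ‖iteratedFDeriv ℝ 2 g x‖ ≤ C) (hgnc : ¬ ∃ c : ℝ, ∀ x, g x = c)
    {w : R2} (hw : ∀ x, g w ≤ g x) : Lop v g w < 0 := by
  obtain ⟨Cg, hCg⟩ := hgb
  obtain ⟨C, hC⟩ := hg2b
  obtain ⟨M, hM⟩ := hvb
  let d y := g (w + y) + g (w - y) - 2 * g w
  have hgc := hg.continuous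
  have hdc : Continuous d := by fun_prop
  have hd₀ : ∀ y, 0 ≤ d y := fun y => by linarith [hw (w + y), hw (w - y)]
  obtain ⟨x₀, hx₀⟩ : ∃ x₀, g w < g x₀ := by
    obtain ⟨x₀, hx₀⟩ := not_forall.1 (not_exists.1 hgnc (g w))
    exact ⟨x₀, (hw x₀).lt_of_ne' hx₀⟩
  have hopen : 0 < volume {y | 0 < d y} := by
    refine (isOpen_lt continuous_const hdc).measure_pos volume ⟨x₀ - w, ?_⟩
    have := hw (w - (x₀ - w))
    show 0 < g (w + (x₀ - w)) + g (w - (x₀ - w)) - 2 * g w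
    rw [add_sub_cancel]
    linarith
  have hsupp : {y | 0 < d y} ⊆ support (fun y => d y * Kbar v y) := by
    intro y hy
    have hy₀ : y ≠ 0 := by rintro rfl; simp [d] at hy; linarith
    exact (mul_pos hy (Kbar_pos hvpos hy₀)).ne'
  have hdK₀ : 0 ≤ fun y => d y * Kbar v y := fun y =>
    mul_nonneg (hd₀ y) (Kbar_nonneg (fun θ => (hvpos θ).le) y)
  have hint : 0 < ∫ y, d y * Kbar v y :=
    (integral_pos_iff_support_of_nonneg hdK₀ (integrable_secondDiff_mul_Kbar hvm hM hg hCg hC w)).2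
      (hopen.trans_le (measure_mono hsupp))
  exact mul_neg_of_neg_of_pos (by simp [pi_pos]) hint

/-- strict sign of `L̄ g` at global minima and maxima of a bounded,
non-constant C² function `g` with bounded second derivatives. -/
theorem stmt11 (β : ℝ) (hβ1 : 2/3 < β) (hβ2 : β < 3/2) (v : ℝ → ℝ) (hv : IsVBeta β v)
    (g : R2 → ℝ) (hg : ContDiff ℝ 2 g)
    (hgb : ∃ C, ∀ x, |g x| ≤ C)
    (hg2b : ∃ C, ∀ x, ‖iteratedFDeriv ℝ 2 g x‖ ≤ C)
    (hgnc : ¬ ∃ c : ℝ, ∀ x, g x = c) :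
    (∀ wm : R2, (∀ x, g wm ≤ g x) → Lop v g wm < 0) ∧
    (∀ wM : R2, (∀ x, g x ≤ g wM) → 0 < Lop v g wM) := by
  have hvpos : ∀ θ, 0 < v θ := hv.pos hβ1 hβ2
  have hvm : Measurable v := hv.1.continuous.measurable
  have hvb : ∃ M, ∀ θ, |v θ| ≤ M := by
    obtain ⟨M, hM⟩ := isBounded_iff_forall_norm_le.1
      (hv.2.1.isBounded_of_continuous pi_ne_zero hv.1.continuous)
    exact ⟨M, fun θ => hM _ (mem_range_self θ)⟩
  refine ⟨fun wm hwm => Lop_lt_zero_of_forall_le hvm hvb hvpos hg hgb hg2b hgnc hwm,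
    fun wM hwM => ?_⟩
  obtain ⟨Cg, hCg⟩ := hgb
  obtain ⟨C, hC⟩ := hg2b
  have h := Lop_lt_zero_of_forall_le hvm hvb hvpos hg.neg (g := -g)
    ⟨Cg, fun x => by simpa using hCg x⟩
    ⟨C, fun x => by simpa [iteratedFDeriv_neg_apply] using hC x⟩
    (fun ⟨c, hc⟩ => hgnc ⟨-c, fun x => by simp [← hc x]⟩)
    (w := wM) (fun x => neg_le_neg (hwM x))
  rwa [Lop_neg, neg_lt_zero] at h
end
end
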